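/- Dual mean characterization: the unique minimizer over z ∈ X of E[D_F[z||X]] is z = (E[∇F(X)])*, i.e. ∇F^{-1}(E[∇F(X)]): the primal pullback of the mean of X in dual coordinates. -/

import Mathlib

/-!
Bregman's three-point identity `D(z,x) = D(z,m) + D(m,x) + ⟪z - m, ∇F m - ∇F x⟫`, integrated
against the law of `X`, loses its inner-product term when `∇F m = E[∇F(X)]`. Hence
`E[D(z,X)] = D(z,m) + E[D(m,X)]`, and `D(z,m)` is nonnegative, vanishing only at `z = m`, by the
(strict) gradient inequality for convex functions.
-/

open MeasureTheory

section

variable {E : Type*} [NormedAddCommGroup E] [InnerProductSpace ℝ E]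

def bregmanDiv (F : E → ℝ) (f' : E → E) (y x : E) : ℝ :=
  F y - F x - inner ℝ (f' x) (y - x)

lemma bregmanDiv_three_point (F : E → ℝ) (f' : E → E) (z m x : E) :
    bregmanDiv F f' z x =
      bregmanDiv F f' z m + bregmanDiv F f' m x + inner ℝ (z - m) (f' m - f' x) := by
  have : z - x = (z - m) + (m - x) := by abel
  simp only [bregmanDiv, this, inner_add_right, inner_sub_right, real_inner_comm (z - m)]
  ring

variable [CompleteSpace E] {S : Set E} {F : E → ℝ} {x y g : E}

lemma HasGradientAt.hasDerivAt_comp_lineMap (hg : HasGradientAt F g x) (y : E) :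
    HasDerivAt (F ∘ AffineMap.lineMap (k := ℝ) x y) (inner ℝ g (y - x)) 0 := by
  have hFx : HasFDerivAt F (InnerProductSpace.toDual ℝ E g) (AffineMap.lineMap x y (0 : ℝ)) := by
    simpa using hg.hasFDerivAt
  simpa using hFx.comp_hasDerivAt (0 : ℝ) AffineMap.hasDerivAt_lineMap

lemma ConvexOn.inner_le_sub_of_hasGradientAt (hF : ConvexOn ℝ S F) (hx : x ∈ S) (hy : y ∈ S)
    (hg : HasGradientAt F g x) : inner ℝ g (y - x) ≤ F y - F x := by
  have hline : ConvexOn ℝ (AffineMap.lineMap x y ⁻¹' S) (F ∘ AffineMap.lineMap x y) :=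
    hF.comp_affineMap _
  simpa [slope_def_field] using hline.le_slope_of_hasDerivAt (by simpa) (by simpa) zero_lt_one
    (hg.hasDerivAt_comp_lineMap y)

lemma StrictConvexOn.inner_lt_sub_of_hasGradientAt (hF : StrictConvexOn ℝ S F) (hx : x ∈ S)
    (hy : y ∈ S) (hxy : x ≠ y) (hg : HasGradientAt F g x) : inner ℝ g (y - x) < F y - F x := by
  set m : E := (1 / 2 : ℝ) • x + (1 / 2 : ℝ) • y
  have hm : m ∈ S := hF.1 hx hy (by norm_num) (by norm_num) (by norm_num)
  have hFm : F m < 1 / 2 * F x + 1 / 2 * F y :=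
    hF.2 hx hy hxy (by norm_num) (by norm_num) (by norm_num)
  have hmx : m - x = (1 / 2 : ℝ) • (y - x) := by module
  have := hF.convexOn.inner_le_sub_of_hasGradientAt hx hm hg
  rw [hmx, real_inner_smul_right] at this
  linarith

lemma ConvexOn.bregmanDiv_nonneg {f' : E → E} (hF : ConvexOn ℝ S F) (hy : y ∈ S) (hx : x ∈ S)
    (hf' : HasGradientAt F (f' x) x) : 0 ≤ bregmanDiv F f' y x :=
  sub_nonneg.2 (hF.inner_le_sub_of_hasGradientAt hx hy hf')

lemma StrictConvexOn.bregmanDiv_pos {f' : E → E} (hF : StrictConvexOn ℝ S F) (hy : y ∈ S)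
    (hx : x ∈ S) (hyx : y ≠ x) (hf' : HasGradientAt F (f' x) x) : 0 < bregmanDiv F f' y x :=
  sub_pos.2 (hF.inner_lt_sub_of_hasGradientAt hx hy hyx.symm hf')

variable {Ω : Type*} [MeasurableSpace Ω] {μ : Measure Ω} [IsProbabilityMeasure μ]

lemma integral_bregmanDiv_of_eq_integral (F : E → ℝ) (f' : E → E) {X : Ω → E} {m : E}
    (hm : f' m = ∫ ω, f' (X ω) ∂μ) (hf'X : Integrable (fun ω => f' (X ω)) μ)
    (hmX : Integrable (fun ω => bregmanDiv F f' m (X ω)) μ) (z : E) :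
    ∫ ω, bregmanDiv F f' z (X ω) ∂μ = bregmanDiv F f' z m + ∫ ω, bregmanDiv F f' m (X ω) ∂μ := by
  have hdev : Integrable (fun ω => f' m - f' (X ω)) μ := (integrable_const _).sub hf'X
  have hmean : ∫ ω, inner ℝ (z - m) (f' m - f' (X ω)) ∂μ = 0 := by
    rw [integral_inner hdev, integral_sub (integrable_const _) hf'X, integral_const, hm]
    simp
  have hshift : Integrable (fun ω => bregmanDiv F f' z m + bregmanDiv F f' m (X ω)) μ :=
    (integrable_const _).add hmX
  rw [funext fun ω => bregmanDiv_three_point F f' z m (X ω),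
    integral_add hshift (hdev.const_inner (𝕜 := ℝ) (z - m)), integral_add (integrable_const _) hmX,
    hmean]
  simp

end

theorem dual_mean_is_central_prediction_general {d : ℕ}
    (S : Set (EuclideanSpace ℝ (Fin d)))
    (F : EuclideanSpace ℝ (Fin d) → ℝ)
    (f' g : EuclideanSpace ℝ (Fin d) → EuclideanSpace ℝ (Fin d))
    (hF : StrictConvexOn ℝ S F)
    (hdiff : ∀ x ∈ S, HasGradientAt F (f' x) x)
    (D : EuclideanSpace ℝ (Fin d) → EuclideanSpace ℝ (Fin d) → ℝ)
    (hD : ∀ y x, D y x = F y - F x - ((inner ℝ (f' x) (y - x) : ℝ)))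
    {Ω : Type*} [MeasurableSpace Ω] (μ : Measure Ω) [IsProbabilityMeasure μ]
    (X : Ω → EuclideanSpace ℝ (Fin d))
    (hdint : Integrable (fun ω => f' (X ω)) μ)
    -- E[∇F(X)] is in the range of ∇F
    (hrange : f' (g (∫ ω, f' (X ω) ∂μ)) = ∫ ω, f' (X ω) ∂μ)
    (hmem : g (∫ ω, f' (X ω) ∂μ) ∈ S)
    (hint : ∀ z ∈ S, Integrable (fun ω => D z (X ω)) μ) :
    (∀ z ∈ S, ∫ ω, D (g (∫ ω', f' (X ω') ∂μ)) (X ω) ∂μ ≤ ∫ ω, D z (X ω) ∂μ) ∧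
    (∀ z ∈ S, ∫ ω, D z (X ω) ∂μ = ∫ ω, D (g (∫ ω', f' (X ω') ∂μ)) (X ω) ∂μ →
      z = g (∫ ω', f' (X ω') ∂μ)) := by
  obtain rfl : D = bregmanDiv F f' := funext fun y => funext (hD y)
  set m := g (∫ ω, f' (X ω) ∂μ)
  have hsplit := integral_bregmanDiv_of_eq_integral F f' hrange hdint (hint m hmem)
  refine ⟨fun z hz => ?_, fun z hz heq => ?_⟩
  · rw [hsplit z]
    exact le_add_of_nonneg_left (hF.convexOn.bregmanDiv_nonneg hz hmem (hdiff m hmem))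
  · by_contra hne
    have hpos := hF.bregmanDiv_pos hz hmem hne (hdiff m hmem)
    rw [hsplit z] at heq
    linarith

/-- Dual mean characterization: the unique minimizer over `z ∈ X` of `E[D_F[z‖X]]`
is `z = ∇F⁻¹(E[∇F(X)])`, the primal pullback of the mean of `X` in dual coordinates. -/
theorem dual_mean_is_central_prediction {d : ℕ}
    (S : Set (EuclideanSpace ℝ (Fin d))) (hSc : IsClosed S) (hSv : Convex ℝ S)
    (F : EuclideanSpace ℝ (Fin d) → ℝ)
    (f' g : EuclideanSpace ℝ (Fin d) → EuclideanSpace ℝ (Fin d))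
    (hF : StrictConvexOn ℝ S F)
    (hdiff : ∀ x ∈ S, HasGradientAt F (f' x) x)
    -- g = ∇F⁻¹ inverts the gradient
    (hg : ∀ x ∈ S, g (f' x) = x)
    (D : EuclideanSpace ℝ (Fin d) → EuclideanSpace ℝ (Fin d) → ℝ)
    (hD : ∀ y x, D y x = F y - F x - ((inner ℝ (f' x) (y - x) : ℝ)))
    {Ω : Type*} [MeasurableSpace Ω] (μ : Measure Ω) [IsProbabilityMeasure μ]
    (X : Ω → EuclideanSpace ℝ (Fin d))
    (hXm : AEMeasurable X μ) (hXS : ∀ᵐ ω ∂μ, X ω ∈ S)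
    (hdint : Integrable (fun ω => f' (X ω)) μ)
    -- E[∇F(X)] is in the range of ∇F
    (hrange : f' (g (∫ ω, f' (X ω) ∂μ)) = ∫ ω, f' (X ω) ∂μ)
    (hmem : g (∫ ω, f' (X ω) ∂μ) ∈ S)
    (hint : ∀ z ∈ S, Integrable (fun ω => D z (X ω)) μ) :
    (∀ z ∈ S, ∫ ω, D (g (∫ ω', f' (X ω') ∂μ)) (X ω) ∂μ ≤ ∫ ω, D z (X ω) ∂μ) ∧
    (∀ z ∈ S, ∫ ω, D z (X ω) ∂μ = ∫ ω, D (g (∫ ω', f' (X ω') ∂μ)) (X ω) ∂μ →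
      z = g (∫ ω', f' (X ω') ∂μ)) :=
  dual_mean_is_central_prediction_general S F f' g hF hdiff D hD μ X hdint hrange hmem hint
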